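/- arXiv:2106.00508 — 3 statements merged into one kernel-verified Lean document; each statement's English description precedes it below -/
import Mathlib

section
/- Consider a greedy peeling process on an undirected graph G = (V,E): starting with S₁ = V, at each step t remove a vertex v_t of minimum degree in the subgraph induced by S_t, forming S_{t+1} = S_t \ {v_t}, until the set is empty. Then the maximum over t of d(S_t) = |E(S_t)|/|S_t| is at least d(G)/2, where d(G) is the maximum density over all nonempty subsets. -/
open Finset

noncomputable def edgesIn {V : Type*} [Fintype V] [DecidableEq V]
    (G : SimpleGraph V) (S : Finset V) : ℕ :=
  letI := Classical.decRel G.Adj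
  letI : DecidablePred (fun e : Sym2 V => ∀ v ∈ e, v ∈ S) := Classical.decPred _
  (G.edgeFinset.filter fun e => ∀ v ∈ e, v ∈ S).card

noncomputable def density {V : Type*} [Fintype V] [DecidableEq V]
    (G : SimpleGraph V) (S : Finset V) : ℝ :=
  (edgesIn G S : ℝ) / S.card

noncomputable def maxDensity {V : Type*} [Fintype V] [DecidableEq V] [Nonempty V]
    (G : SimpleGraph V) : ℝ :=
  (Finset.univ.powerset.filter Finset.Nonempty).sup'
    ⟨{Classical.arbitrary V}, by simp⟩ (density G)

noncomputable def degIn {V : Type*} [DecidableEq V]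
    (G : SimpleGraph V) (v : V) (S : Finset V) : ℕ :=
  letI := Classical.decRel G.Adj
  ((S.erase v).filter (G.Adj v)).card

/-! Let `T` be a densest set, with density `d`. Removing any vertex `w` from `T` cannot raise
the density, so `w` has at least `d` neighbours in `T`. At the first step `t` at which the
peeling removes a vertex of `T`, we still have `T ⊆ S t`, so the removed vertex, and hence by
minimality every vertex of `S t`, has degree at least `d` in `S t`. Summing degrees gives
`2 |E(S t)| ≥ d |S t|`. -/

namespace SimpleGraph

variable {V : Type*} [DecidableEq V] (G : SimpleGraph V)

lemma degIn_eq_card_filter [DecidableRel G.Adj] (v : V) (S : Finset V) :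
    degIn G v S = #{u ∈ S | G.Adj v u} := by
  rw [degIn, filter_erase, erase_eq_of_notMem (by simp)]
  congr!

lemma degIn_mono (v : V) {S T : Finset V} (h : S ⊆ T) : degIn G v S ≤ degIn G v T := by
  classical
  simp only [degIn_eq_card_filter]
  exact card_le_card (filter_subset_filter _ h)

variable [Fintype V]

lemma edgesIn_eq_card_filter [DecidableRel G.Adj] (S : Finset V) :
    edgesIn G S = #{e ∈ G.edgeFinset | ∀ v ∈ e, v ∈ S} := by
  rw [edgesIn]
  congr!

@[simp]
lemma edgesIn_empty : edgesIn G ∅ = 0 := by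
  classical
  rw [edgesIn_eq_card_filter, card_eq_zero, filter_eq_empty_iff]
  exact fun e _ h => notMem_empty _ (h _ (Sym2.out_fst_mem e))

lemma edgesIn_erase {S : Finset V} {w : V} (hw : w ∈ S) :
    edgesIn G S = edgesIn G (S.erase w) + degIn G w S := by
  classical
  have hsplit : ({e ∈ G.edgeFinset | ∀ v ∈ e, v ∈ S} : Finset (Sym2 V)) =
      {e ∈ G.edgeFinset | ∀ v ∈ e, v ∈ S.erase w} ∪
        ({u ∈ S | G.Adj w u}).image (fun u => s(w, u)) := by
    ext e
    induction e using Sym2.ind with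
    | h x y =>
      simp only [mem_union, mem_filter, mem_image, mem_edgeFinset, mem_edgeSet, Sym2.mem_iff,
        mem_erase]
      grind [G.adj_comm]
  have hdisj : Disjoint ({e ∈ G.edgeFinset | ∀ v ∈ e, v ∈ S.erase w} : Finset (Sym2 V))
      (({u ∈ S | G.Adj w u}).image (fun u => s(w, u))) := by
    refine Finset.disjoint_left.mpr fun e he he' => ?_
    obtain ⟨u, -, rfl⟩ := mem_image.mp he'
    simpa using (mem_filter.mp he).2 w (Sym2.mem_mk_left w u)
  rw [edgesIn_eq_card_filter, edgesIn_eq_card_filter, degIn_eq_card_filter, hsplit,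
    card_union_of_disjoint hdisj, card_image_of_injective _ fun _ _ h => Sym2.congr_right.mp h]

lemma sum_degIn_eq_two_mul_edgesIn (S : Finset V) : ∑ u ∈ S, degIn G u S = 2 * edgesIn G S := by
  classical
  induction S using Finset.induction_on with
  | empty => simp
  | insert a s ha ih =>
    have hdeg : ∀ u ∈ s, degIn G u (insert a s) = degIn G u s + if G.Adj a u then 1 else 0 := by
      intro u _
      rw [degIn_eq_card_filter, degIn_eq_card_filter, filter_insert, G.adj_comm]
      split_ifs
      · exact card_insert_of_notMem fun h => ha (mem_filter.mp h).1
      · rfl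
    have hdeg_self : degIn G a (insert a s) = #{u ∈ s | G.Adj a u} := by
      rw [degIn_eq_card_filter, filter_insert, if_neg G.irrefl]
    rw [sum_insert ha, sum_congr rfl hdeg, sum_add_distrib, ih, sum_boole, Nat.cast_id,
      edgesIn_erase G (mem_insert_self a s), erase_insert ha, hdeg_self]
    ring

lemma half_le_density_of_le_degIn {S : Finset V} (hS : S.Nonempty) {c : ℝ}
    (h : ∀ u ∈ S, c ≤ degIn G u S) : c / 2 ≤ density G S := by
  have hcard : (0 : ℝ) < #S := by exact_mod_cast hS.card_pos
  have hsum : c * #S ≤ 2 * edgesIn G S := by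
    calc c * #S = ∑ _u ∈ S, c := by rw [sum_const, nsmul_eq_mul, mul_comm]
      _ ≤ ∑ u ∈ S, (degIn G u S : ℝ) := sum_le_sum h
      _ = 2 * edgesIn G S := by exact_mod_cast G.sum_degIn_eq_two_mul_edgesIn S
  rw [density, div_le_div_iff₀ two_pos hcard]
  linarith

variable [Nonempty V]

lemma density_le_maxDensity {S : Finset V} (hS : S.Nonempty) : density G S ≤ maxDensity G :=
  le_sup' (density G) (by simpa using hS)

lemma exists_density_eq_maxDensity : ∃ T : Finset V, T.Nonempty ∧ density G T = maxDensity G := by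
  obtain ⟨T, hT, hdens⟩ := exists_mem_eq_sup' _ (density G)
  exact ⟨T, (mem_filter.mp hT).2, hdens.symm⟩

lemma edgesIn_le_maxDensity_mul_card (S : Finset V) : (edgesIn G S : ℝ) ≤ maxDensity G * #S := by
  obtain rfl | hS := S.eq_empty_or_nonempty
  · simp
  · have := G.density_le_maxDensity hS
    rwa [density, div_le_iff₀ (by exact_mod_cast hS.card_pos)] at this

lemma maxDensity_le_degIn {T : Finset V} (hT : density G T = maxDensity G) {w : V} (hw : w ∈ T) :
    maxDensity G ≤ degIn G w T := by
  have hcard : (0 : ℝ) < #T := by exact_mod_cast card_pos.mpr ⟨w, hw⟩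
  have hedges : (edgesIn G T : ℝ) = maxDensity G * #T := by
    rw [← hT, density, div_mul_cancel₀ _ hcard.ne']
  have herase := G.edgesIn_le_maxDensity_mul_card (T.erase w)
  rw [cast_card_erase_of_mem hw] at herase
  have hsplit : (edgesIn G T : ℝ) = edgesIn G (T.erase w) + degIn G w T := by
    exact_mod_cast G.edgesIn_erase hw
  linarith

end SimpleGraph

namespace Finset

variable {α : Type*} [DecidableEq α] {S : ℕ → Finset α} {v : ℕ → α} {n : ℕ}

lemma card_add_eq_of_eq_erase (hmem : ∀ t < n, v t ∈ S t)
    (hstep : ∀ t < n, S (t + 1) = (S t).erase (v t)) : ∀ t ≤ n, #(S t) + t = #(S 0)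
  | 0, _ => rfl
  | t + 1, (ht : t < n) => by
    rw [hstep t ht, ← card_add_eq_of_eq_erase hmem hstep t ht.le, ← card_erase_add_one (hmem t ht)]
    omega

lemma exists_subset_mem_of_eq_erase (hstep : ∀ t < n, S (t + 1) = (S t).erase (v t))
    {T : Finset α} (h₀ : T ⊆ S 0) (hn : ¬T ⊆ S n) : ∃ t < n, T ⊆ S t ∧ v t ∈ T := by
  induction n with
  | zero => exact absurd h₀ hn
  | succ n ih =>
    by_cases hT : T ⊆ S n
    · refine ⟨n, n.lt_succ_self, hT, ?_⟩
      by_contra hv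
      exact hn (by rw [hstep n n.lt_succ_self]; exact subset_erase.mpr ⟨hT, hv⟩)
    · obtain ⟨t, ht, hsub⟩ := ih (fun t ht => hstep t (ht.trans n.lt_succ_self)) hT
      exact ⟨t, ht.trans n.lt_succ_self, hsub⟩

end Finset

/-- Greedy peeling: starting from `S 0 = univ` and repeatedly removing a vertex of
minimum induced degree, some intermediate set has density at least `d(G)/2`. -/
theorem greedy_peeling_two_approx
    {V : Type*} [Fintype V] [DecidableEq V] [Nonempty V]
    (G : SimpleGraph V)
    (S : ℕ → Finset V) (v : ℕ → V)
    (hinit : S 0 = Finset.univ)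
    (hmem : ∀ t < Fintype.card V, v t ∈ S t)
    (hmin : ∀ t < Fintype.card V, ∀ u ∈ S t, degIn G (v t) (S t) ≤ degIn G u (S t))
    (hstep : ∀ t < Fintype.card V, S (t + 1) = (S t).erase (v t)) :
    ∃ t < Fintype.card V, maxDensity G / 2 ≤ density G (S t) := by
  obtain ⟨T, hT, hTdens⟩ := G.exists_density_eq_maxDensity
  have hend : S (Fintype.card V) = ∅ := by
    have := card_add_eq_of_eq_erase hmem hstep _ le_rfl
    rw [hinit, card_univ] at this
    exact card_eq_zero.mp (by omega)
  obtain ⟨t, ht, hsub, hvt⟩ := exists_subset_mem_of_eq_erase hstep (hinit ▸ subset_univ T)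
    (by rw [hend, subset_empty]; exact hT.ne_empty)
  refine ⟨t, ht, G.half_le_density_of_le_degIn ⟨v t, hsub hvt⟩ fun u hu => ?_⟩
  calc maxDensity G ≤ degIn G (v t) T := G.maxDensity_le_degIn hTdens hvt
    _ ≤ degIn G (v t) (S t) := by exact_mod_cast G.degIn_mono (v t) hsub
    _ ≤ degIn G u (S t) := by exact_mod_cast hmin t ht u hu
end

section
/- Consider a noisy greedy peeling process on an undirected graph G = (V,E): starting with S₁ = V, at each step t remove a vertex v_t ∈ S_t whose degree in the induced subgraph satisfies |E(v_t, S_t)| ≤ min_{v ∈ S_t} |E(v, S_t)| + 2·err, forming S_{t+1} = S_t \ {v_t}. Let t* maximize |E(v_t, S_t)| over all steps t, and let S* = S_{t*}. Then d(S*) ≥ (d(G) − 4·err)/2. -/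
/-! A densest set `T` has minimum induced degree at least `d(G)`, since deleting one of its
vertices cannot raise the density. At the first step `t` at which the peeling removes a vertex
of `T` we still have `T ⊆ S t`, so the degree removed at `t`, and hence the larger one removed
at `t*`, is at least `d(G)`. By noisy minimality every vertex of `S*` then has degree at least
`d(G) - 2·err` in `S*`, and averaging degrees gives `d(S*) ≥ (d(G) - 2·err)/2`. -/

open Finset

section InducedSubgraph

variable {V : Type*} [Fintype V] [DecidableEq V] (G : SimpleGraph V)

lemma edgesIn_eq [DecidableRel G.Adj] (S : Finset V) :
    edgesIn G S = #{e ∈ G.edgeFinset | ∀ v ∈ e, v ∈ S} := by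
  unfold edgesIn; congr!

omit [Fintype V] in
lemma degIn_eq [DecidableRel G.Adj] (v : V) (S : Finset V) :
    degIn G v S = #{w ∈ S.erase v | G.Adj v w} := by
  unfold degIn; congr!

omit [Fintype V] in
lemma degIn_mono (u : V) {S T : Finset V} (h : S ⊆ T) : degIn G u S ≤ degIn G u T := by
  classical
  rw [degIn_eq, degIn_eq]
  exact card_le_card (filter_subset_filter _ (erase_subset_erase _ h))

lemma edgesIn_empty : edgesIn G ∅ = 0 := by
  classical
  simp only [edgesIn_eq, card_eq_zero, filter_eq_empty_iff, notMem_empty, imp_false, not_forall]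
  exact fun e _ => ⟨e.out.1, not_not_intro (Sym2.out_fst_mem e)⟩

lemma edgesIn_erase_add_degIn {S : Finset V} {u : V} (hu : u ∈ S) :
    edgesIn G (S.erase u) + degIn G u S = edgesIn G S := by
  classical
  have h_avoid : {e ∈ G.edgeFinset | ∀ v ∈ e, v ∈ S.erase u}
      = {e ∈ {e ∈ G.edgeFinset | ∀ v ∈ e, v ∈ S} | u ∉ e} := by
    ext e
    simp only [mem_filter, mem_erase]
    exact ⟨fun ⟨he, hS⟩ => ⟨⟨he, fun v hv => (hS v hv).2⟩, fun hue => (hS u hue).1 rfl⟩,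
      fun ⟨⟨he, hS⟩, hue⟩ => ⟨he, fun v hv => ⟨fun h => hue (h ▸ hv), hS v hv⟩⟩⟩
  have h_through : {e ∈ {e ∈ G.edgeFinset | ∀ v ∈ e, v ∈ S} | u ∈ e}
      = {w ∈ S.erase u | G.Adj u w}.image (s(u, ·)) := by
    ext e
    induction e with
    | h x y =>
    simp only [mem_filter, mem_image, mem_erase, SimpleGraph.mem_edgeFinset,
      SimpleGraph.mem_edgeSet, Sym2.mem_iff, forall_eq_or_imp, forall_eq, Sym2.eq_iff]
    constructor
    · rintro ⟨⟨hxy, hx, hy⟩, rfl | rfl⟩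
      · exact ⟨y, ⟨⟨hxy.ne.symm, hy⟩, hxy⟩, Or.inl ⟨rfl, rfl⟩⟩
      · exact ⟨x, ⟨⟨hxy.ne, hx⟩, hxy.symm⟩, Or.inr ⟨rfl, rfl⟩⟩
    · rintro ⟨w, ⟨⟨-, hw⟩, huw⟩, ⟨rfl, rfl⟩ | ⟨rfl, rfl⟩⟩
      · exact ⟨⟨huw, hu, hw⟩, Or.inl rfl⟩
      · exact ⟨⟨huw.symm, hw, hu⟩, Or.inr rfl⟩
  have h_inj : Function.Injective (s(u, ·) : V → Sym2 V) := fun _ _ => Sym2.congr_right.1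
  rw [edgesIn_eq, edgesIn_eq, degIn_eq, h_avoid, ← card_image_of_injective _ h_inj, ← h_through,
    add_comm, card_filter_add_card_filter_not]

omit [Fintype V] in
lemma degIn_eq_degIn_erase_add [DecidableRel G.Adj] {S : Finset V} {u w : V} (hu : u ∈ S)
    (hw : w ≠ u) : degIn G w S = degIn G w (S.erase u) + if G.Adj u w then 1 else 0 := by
  have hu' : u ∉ {x ∈ (S.erase u).erase w | G.Adj w x} := by simp
  rw [degIn_eq, degIn_eq, ← insert_erase (mem_erase.2 ⟨hw.symm, hu⟩), erase_right_comm,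
    filter_insert]
  by_cases h : G.Adj u w
  · rw [if_pos h.symm, if_pos h, card_insert_of_notMem hu']
  · rw [if_neg (mt G.adj_symm h), if_neg h, add_zero]

lemma sum_degIn (S : Finset V) : ∑ u ∈ S, degIn G u S = 2 * edgesIn G S := by
  classical
  induction S using Finset.strongInduction with
  | _ S ih =>
  obtain rfl | ⟨u, hu⟩ := S.eq_empty_or_nonempty
  · simp [edgesIn_empty]
  calc ∑ w ∈ S, degIn G w S
      = degIn G u S + ∑ w ∈ S.erase u, degIn G w S := (add_sum_erase _ _ hu).symm
    _ = degIn G u S + ∑ w ∈ S.erase u, (degIn G w (S.erase u) + if G.Adj u w then 1 else 0) :=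
        congrArg _ <| sum_congr rfl fun w hw =>
          degIn_eq_degIn_erase_add G hu (ne_of_mem_erase hw)
    _ = degIn G u S + (2 * edgesIn G (S.erase u) + degIn G u S) := by
        rw [sum_add_distrib, ih _ (erase_ssubset hu), ← card_filter, degIn_eq]
    _ = 2 * edgesIn G S := by
        rw [← edgesIn_erase_add_degIn G hu]; ring

end InducedSubgraph

section Density

variable {V : Type*} [Fintype V] [DecidableEq V] (G : SimpleGraph V)

lemma div_two_le_density_of_le_degIn {S : Finset V} (hS : S.Nonempty) {m : ℝ}
    (h : ∀ u ∈ S, m ≤ degIn G u S) : m / 2 ≤ density G S := by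
  have hsum : #S • m ≤ 2 * (edgesIn G S : ℝ) := by
    exact_mod_cast (card_nsmul_le_sum S _ m h).trans_eq (by exact_mod_cast sum_degIn G S)
  rw [nsmul_eq_mul] at hsum
  rw [density, le_div_iff₀ (by exact_mod_cast hS.card_pos)]
  linarith

lemma density_le_degIn_of_density_erase_le {S : Finset V} {u : V} (hu : u ∈ S)
    (h : density G (S.erase u) ≤ density G S) : density G S ≤ degIn G u S := by
  have hE : (edgesIn G (S.erase u) : ℝ) + degIn G u S = edgesIn G S := by
    exact_mod_cast edgesIn_erase_add_degIn G hu
  have hk : (#(S.erase u) : ℝ) + 1 = #S := by exact_mod_cast card_erase_add_one hu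
  unfold density at h ⊢
  rw [div_le_iff₀ (by exact_mod_cast card_pos.2 ⟨u, hu⟩)]
  obtain he | hne := (S.erase u).eq_empty_or_nonempty
  · rw [he, edgesIn_empty, Nat.cast_zero, zero_add] at hE
    rw [he, card_empty, Nat.cast_zero, zero_add] at hk
    rw [← hE, ← hk, mul_one]
  · have hk' : (0 : ℝ) < #(S.erase u) := by exact_mod_cast hne.card_pos
    rw [div_le_div_iff₀ hk' (by linarith)] at h
    nlinarith

variable [Nonempty V]

lemma density_le_maxDensity {S : Finset V} (hS : S.Nonempty) : density G S ≤ maxDensity G :=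
  le_sup' (density G) (by simpa using hS)

lemma exists_density_eq_maxDensity : ∃ S : Finset V, S.Nonempty ∧ density G S = maxDensity G := by
  obtain ⟨S, hS, hSmax⟩ := exists_mem_eq_sup' (s := univ.powerset.filter Finset.Nonempty)
    ⟨{Classical.arbitrary V}, by simp⟩ (density G)
  exact ⟨S, (mem_filter.1 hS).2, hSmax.symm⟩

lemma maxDensity_le_degIn {S : Finset V} (hS : density G S = maxDensity G) {u : V} (hu : u ∈ S) :
    maxDensity G ≤ degIn G u S := by
  rw [← hS]
  refine density_le_degIn_of_density_erase_le G hu ?_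
  obtain he | hne := (S.erase u).eq_empty_or_nonempty
  · rw [he, density, card_empty, Nat.cast_zero, div_zero]
    exact div_nonneg (Nat.cast_nonneg _) (Nat.cast_nonneg _)
  · exact hS ▸ density_le_maxDensity G hne

end Density

section Peeling

variable {V : Type*} [Fintype V] [DecidableEq V] {S : ℕ → Finset V} {v : ℕ → V}

lemma card_eq_sub_of_erase_step (hinit : S 0 = univ) (hmem : ∀ t < Fintype.card V, v t ∈ S t)
    (hstep : ∀ t < Fintype.card V, S (t + 1) = (S t).erase (v t)) :
    ∀ t ≤ Fintype.card V, #(S t) = Fintype.card V - t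
  | 0, _ => by rw [hinit, card_univ, Nat.sub_zero]
  | t + 1, ht => by
    rw [hstep t ht, card_erase_of_mem (hmem t ht),
      card_eq_sub_of_erase_step hinit hmem hstep t (Nat.le_of_succ_le ht), Nat.sub_sub]

lemma exists_subset_of_erase_step (hinit : S 0 = univ) (hmem : ∀ t < Fintype.card V, v t ∈ S t)
    (hstep : ∀ t < Fintype.card V, S (t + 1) = (S t).erase (v t))
    {T : Finset V} (hT : T.Nonempty) : ∃ t < Fintype.card V, T ⊆ S t ∧ v t ∈ T := by
  by_contra! h
  have hsub : ∀ t ≤ Fintype.card V, T ⊆ S t := by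
    intro t
    induction t with
    | zero => exact fun _ => hinit ▸ subset_univ T
    | succ t ih =>
      intro ht
      have hT_t := ih (Nat.le_of_succ_le ht)
      rw [hstep t ht]
      exact fun w hw => mem_erase.2 ⟨fun hwv => h t ht hT_t (hwv ▸ hw), hT_t hw⟩
  have hempty : S (Fintype.card V) = ∅ := by
    rw [← card_eq_zero, card_eq_sub_of_erase_step hinit hmem hstep _ le_rfl, Nat.sub_self]
  exact hT.ne_empty (subset_empty.1 (hempty ▸ hsub _ le_rfl))

end Peeling

/-- Noisy greedy peeling: if at each step a vertex whose induced degree is within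
`2·err` of the minimum is removed, and `t*` maximizes the removed vertex's induced
degree, then the corresponding residual set `S* = S t*` satisfies
`d(S*) ≥ (d(G) − 4·err)/2`. -/
theorem noisy_peeling_approx
    {V : Type*} [Fintype V] [DecidableEq V] [Nonempty V]
    (G : SimpleGraph V) (err : ℝ) (herr : 0 ≤ err)
    (S : ℕ → Finset V) (v : ℕ → V)
    (hinit : S 0 = Finset.univ)
    (hmem : ∀ t < Fintype.card V, v t ∈ S t)
    (hnoisymin : ∀ t < Fintype.card V, ∀ u ∈ S t,
      (degIn G (v t) (S t) : ℝ) ≤ (degIn G u (S t) : ℝ) + 2 * err)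
    (hstep : ∀ t < Fintype.card V, S (t + 1) = (S t).erase (v t))
    (tstar : ℕ) (htstar : tstar < Fintype.card V)
    (hmax : ∀ t < Fintype.card V, degIn G (v t) (S t) ≤ degIn G (v tstar) (S tstar)) :
    density G (S tstar) ≥ (maxDensity G - 4 * err) / 2 := by
  obtain ⟨T, hT, hTmax⟩ := exists_density_eq_maxDensity G
  obtain ⟨t, ht, hTS, hvT⟩ := exists_subset_of_erase_step hinit hmem hstep hT
  have hdeg_tstar : maxDensity G ≤ degIn G (v tstar) (S tstar) :=
    calc maxDensity G ≤ degIn G (v t) T := maxDensity_le_degIn G hTmax hvT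
      _ ≤ degIn G (v t) (S t) := by exact_mod_cast degIn_mono G _ hTS
      _ ≤ degIn G (v tstar) (S tstar) := by exact_mod_cast hmax t ht
  have hdens : (degIn G (v tstar) (S tstar) - 2 * err) / 2 ≤ density G (S tstar) :=
    div_two_le_density_of_le_degIn G ⟨_, hmem tstar htstar⟩ fun u hu =>
      sub_le_iff_le_add.2 (hnoisymin tstar htstar u hu)
  linarith
end

section
/- For the symmetric geometric distribution Geom(γ) with γ = e^{ε/Δ} (ε > 0, Δ > 0), the mechanism f'(I) = f(I) + Geom(e^{ε/Δ}) satisfies ε-differential privacy for any integer-valued function f with global sensitivity at most Δ: for any two inputs I, I' with |f(I) − f(I')| ≤ Δ, and any integer set U, Pr[f'(I) ∈ U] ≤ e^ε · Pr[f'(I') ∈ U]. -/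
/-- The mass of the symmetric geometric distribution `Geom(γ)` at `k`. -/
noncomputable def geomMass (γ : ℝ) (k : ℤ) : ℝ := (γ - 1) / (γ + 1) * γ ^ (-|k|)

lemma geomMass_nonneg {γ : ℝ} (hγ : 1 < γ) (k : ℤ) : 0 ≤ geomMass γ k := by
  have h0 : (0:ℝ) < γ := lt_trans one_pos hγ
  unfold geomMass
  have : 0 ≤ (γ - 1) / (γ + 1) := div_nonneg (by linarith) (by linarith)
  exact mul_nonneg this (zpow_nonneg h0.le _)

lemma geomMass_summable {γ : ℝ} (hγ : 1 < γ) : Summable (fun n : ℤ => geomMass γ n) := by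
  have h0 : (0:ℝ) < γ := lt_trans one_pos hγ
  have hr : |γ⁻¹| < 1 := by
    rw [abs_of_pos (inv_pos.mpr h0)]
    exact inv_lt_one_of_one_lt₀ hγ
  have hs : Summable (fun n : ℤ => (γ - 1) / (γ + 1) * (γ⁻¹) ^ n.natAbs) := by
    apply Summable.mul_left
    apply Summable.of_nat_of_neg
    · simpa using summable_geometric_of_abs_lt_one hr
    · simpa using summable_geometric_of_abs_lt_one hr
  convert hs using 2 with n
  unfold geomMass
  congr 1
  rw [zpow_neg, ← inv_zpow, ← zpow_natCast γ⁻¹, Int.natCast_natAbs]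

/-- ε-differential privacy of the geometric mechanism: for `γ = e^{ε/Δ}`, shifting the
symmetric geometric noise by two values `a, b` with `|a − b| ≤ Δ` changes the
probability of any set of integer outcomes by at most a factor `e^ε`. -/
theorem geometric_mechanism_dp (ε Δ : ℝ) (hε : 0 < ε) (hΔ : 0 < Δ)
    (a b : ℤ) (hab : (|a - b| : ℝ) ≤ Δ) (U : Set ℤ) :
    ∑' k : U, geomMass (Real.exp (ε / Δ)) ((k : ℤ) - a) ≤
      Real.exp ε * ∑' k : U, geomMass (Real.exp (ε / Δ)) ((k : ℤ) - b) := by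
  set γ := Real.exp (ε / Δ) with hγdef
  have hεΔ : 0 < ε / Δ := div_pos hε hΔ
  have hγ : 1 < γ := by rw [hγdef]; exact Real.one_lt_exp_iff.mpr hεΔ
  have h0 : (0:ℝ) < γ := lt_trans one_pos hγ
  -- pointwise bound
  have key : ∀ k : ℤ, geomMass γ (k - a) ≤ Real.exp ε * geomMass γ (k - b) := by
    intro k
    unfold geomMass
    rw [mul_comm (Real.exp ε), mul_assoc]
    apply mul_le_mul_of_nonneg_left _ (div_nonneg (by linarith) (by linarith))
    have h1 : γ ^ (-|k - a|) = γ ^ (|k - b| - |k - a|) * γ ^ (-|k - b|) := by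
      rw [← zpow_add₀ (ne_of_gt h0)]; ring_nf
    rw [h1, mul_comm (γ ^ (-|k - b|))]
    apply mul_le_mul_of_nonneg_right _ (zpow_nonneg h0.le _)
    have h2 : |k - b| - |k - a| ≤ |a - b| := by
      have := abs_sub_abs_le_abs_sub (k - b) (k - a)
      have h3 : (k - b) - (k - a) = a - b := by ring
      rwa [h3] at this
    calc γ ^ (|k - b| - |k - a|) ≤ γ ^ |a - b| := zpow_le_zpow_right₀ hγ.le h2
      _ ≤ Real.exp ε := by
          rw [hγdef, ← Int.toNat_of_nonneg (abs_nonneg (a - b)), zpow_natCast,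
            ← Real.exp_nat_mul]
          apply Real.exp_le_exp.mpr
          have habn : ((|a - b|.toNat : ℤ) : ℝ) ≤ Δ := by
            rw [Int.toNat_of_nonneg (abs_nonneg (a - b))]; exact_mod_cast hab
          calc ((|a - b|.toNat : ℕ) : ℝ) * (ε / Δ) ≤ Δ * (ε / Δ) := by
                apply mul_le_mul_of_nonneg_right _ hεΔ.le
                exact_mod_cast habn
            _ = ε := by field_simp
  -- summability
  have hsb : Summable (fun k : U => geomMass γ ((k : ℤ) - b)) := by
    have := (geomMass_summable hγ).comp_injective
      (i := fun k : U => (k : ℤ) - b) (fun x y h => by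
        apply Subtype.ext; have := sub_left_injective h; exact_mod_cast this)
    exact this
  have hsa : Summable (fun k : U => geomMass γ ((k : ℤ) - a)) := by
    have := (geomMass_summable hγ).comp_injective
      (i := fun k : U => (k : ℤ) - a) (fun x y h => by
        apply Subtype.ext; have := sub_left_injective h; exact_mod_cast this)
    exact this
  calc ∑' k : U, geomMass γ ((k : ℤ) - a)
      ≤ ∑' k : U, Real.exp ε * geomMass γ ((k : ℤ) - b) :=
        Summable.tsum_le_tsum (fun k => key k) hsa (hsb.mul_left _)
    _ = Real.exp ε * ∑' k : U, geomMass γ ((k : ℤ) - b) := tsum_mul_left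
end
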